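/- arXiv:2507.02728 — 3 statements merged into one kernel-verified Lean document; each statement's English description precedes it below -/
import Mathlib

section
/- Let A = (a_1, …, a_n) be a sequence of integers with a_1 + … + a_n = −1. Then (i) all n cyclic permutations of A are pairwise distinct as sequences, and (ii) there exists exactly one cyclic permutation A' = (a'_1, …, a'_n) of A such that a'_1 + … + a'_j ≥ 0 for every j ∈ [n−1]. -/
/-!
Let `P k` be the `k`-th prefix sum of the periodic extension of `A`, so that `P (k + n) = P k - 1`.
The `r`-th rotation has nonnegative proper prefix sums iff `P r ≤ P (r + j)` for `1 ≤ j ≤ n - 1`.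
The first minimiser of `P` on `[0, n)` has this property: later values in the window are at
least the minimum, and earlier ones exceed it strictly, hence by at least `1`, which pays for
the drop across a period. Two such indices `r < r'` would give `P r ≤ P r' ≤ P (r + n) < P r`.
Finally, if two rotations coincided, translating the unique good rotation by their difference
would give a second good one.
-/

open Finset

section CyclicPrefixSum

open Fin.NatCast

variable {n : ℕ} [NeZero n] {M : Type*} [AddCommMonoid M]

theorem Fin.sum_filter_val_lt_eq_sum_range (f : Fin n → M) {j : ℕ} (hj : j ≤ n) :
    ∑ t ∈ univ.filter (fun t : Fin n => (t : ℕ) < j), f t = ∑ i ∈ range j, f (i : Fin n) := by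
  refine sum_nbij' Fin.val (fun i => (i : Fin n)) ?_ ?_ ?_ ?_ ?_
  · simp
  · intro i hi
    simp only [mem_range] at hi
    simp [Fin.val_cast_of_lt (hi.trans_le hj), hi]
  · simp
  · intro i hi
    simp only [mem_range] at hi
    simp [Fin.val_cast_of_lt (hi.trans_le hj)]
  · simp

def cyclicPrefixSum (A : Fin n → M) (k : ℕ) : M :=
  ∑ i ∈ range k, A (i : Fin n)

theorem cyclicPrefixSum_add_period (A : Fin n → M) (k : ℕ) :
    cyclicPrefixSum A (k + n) = cyclicPrefixSum A k + ∑ t, A t := by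
  rw [cyclicPrefixSum, cyclicPrefixSum, add_comm k n, sum_range_add, add_comm,
    ← Fin.sum_univ_eq_sum_range (fun i => A (i : Fin n))]
  simp only [Nat.cast_add, Fin.natCast_self, zero_add, Fin.cast_val_eq_self]

theorem cyclicPrefixSum_add (A : Fin n → M) (r : Fin n) {j : ℕ} (hj : j ≤ n) :
    cyclicPrefixSum A (r + j) =
      cyclicPrefixSum A r + ∑ t ∈ univ.filter (fun t : Fin n => (t : ℕ) < j), A (t + r) := by
  rw [cyclicPrefixSum, sum_range_add, Fin.sum_filter_val_lt_eq_sum_range _ hj]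
  simp only [Nat.cast_add, Fin.cast_val_eq_self, add_comm (r : Fin n)]
  rfl

end CyclicPrefixSum

def IsMinOnWindow {α : Type*} [Preorder α] (F : ℕ → α) (n r : ℕ) : Prop :=
  ∀ j, 1 ≤ j → j ≤ n - 1 → F r ≤ F (r + j)

theorem IsMinOnWindow.eq {α : Type*} [Preorder α] {F : ℕ → α} {n r r' : ℕ}
    (hF : ∀ k, F (k + n) < F k) (hr : IsMinOnWindow F n r) (hr' : IsMinOnWindow F n r')
    (hrn : r < n) (hr'n : r' < n) : r = r' := by
  wlog hle : r ≤ r' generalizing r r'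
  · exact (this hr' hr hr'n hrn (by omega)).symm
  by_contra hne
  have h₁ := hr (r' - r) (by omega) (by omega)
  have h₂ := hr' (r + n - r') (by omega) (by omega)
  rw [Nat.add_sub_cancel' hle] at h₁
  rw [Nat.add_sub_cancel' (by omega)] at h₂
  exact (hF r).not_ge (h₁.trans h₂)

theorem exists_isMinOnWindow {F : ℕ → ℤ} {n : ℕ} (hn : 0 < n) (hF : ∀ k, F k - 1 ≤ F (k + n)) :
    ∃ r < n, IsMinOnWindow F n r := by
  have hmin : ∃ r, r < n ∧ ∀ i < n, F r ≤ F i := by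
    obtain ⟨r, hr, hmin⟩ := exists_min_image (range n) F ⟨0, mem_range.2 hn⟩
    exact ⟨r, mem_range.1 hr, fun i hi => hmin i (mem_range.2 hi)⟩
  obtain ⟨hrn, hrmin⟩ := Nat.find_spec hmin
  set r := Nat.find hmin
  have hbefore : ∀ k < r, F r < F k := by
    intro k hk
    have := Nat.find_min hmin hk
    push Not at this
    obtain ⟨i, hi, hik⟩ := this (hk.trans hrn)
    exact (hrmin i hi).trans_lt hik
  refine ⟨r, hrn, fun j _ hj => ?_⟩
  rcases lt_or_ge (r + j) n with h | h
  · exact hrmin _ h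
  · have := hbefore (r + j - n) (by omega)
    have := hF (r + j - n)
    rw [Nat.sub_add_cancel h] at this
    omega

theorem Function.injective_translate_of_existsUnique {G α : Type*} [AddGroup G] (A : G → α)
    {Q : (G → α) → Prop} (h : ∃! r, Q (fun t => A (t + r))) :
    Function.Injective (fun r t => A (t + r)) := by
  intro r r' hrr'
  obtain ⟨s, hs, huniq⟩ := h
  have hshift : (fun t => A (t + (s + -r + r'))) = fun t => A (t + s) := by
    funext t
    have := congrFun hrr' (t + s + -r)
    simp only [add_assoc, neg_add_cancel, add_zero] at this ⊢
    exact this.symm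
  have := huniq _ (hshift ▸ hs)
  rw [add_assoc, add_eq_left, neg_add_eq_zero] at this
  exact this

def HasNonnegPrefixSums {n : ℕ} (B : Fin n → ℤ) : Prop :=
  ∀ j : ℕ, 1 ≤ j → j ≤ n - 1 → 0 ≤ ∑ t ∈ univ.filter (fun t : Fin n => (t : ℕ) < j), B t

theorem hasNonnegPrefixSums_rotate_iff {n : ℕ} [NeZero n] (A : Fin n → ℤ) (r : Fin n) :
    HasNonnegPrefixSums (fun t => A (t + r)) ↔ IsMinOnWindow (cyclicPrefixSum A) n r := by
  refine forall₃_congr fun j _ hj => ?_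
  rw [cyclicPrefixSum_add A r (by omega), le_add_iff_nonneg_right]

/-- Let `A` be a sequence of `n` integers summing to `−1`.  The `r`-th cyclic
permutation of `A` is `t ↦ A (t + r)` (indices in `Fin n`, addition mod `n`).
Then (i) all `n` cyclic permutations of `A` are pairwise distinct, and
(ii) there is exactly one cyclic permutation whose first `j` entries sum to a
nonnegative number for every `j ∈ [n−1]`. -/
theorem stmt3 (n : ℕ) (A : Fin n → ℤ) (hsum : ∑ t, A t = -1) :
    Function.Injective (fun r : Fin n => fun t : Fin n => A (t + r)) ∧
    ∃! r : Fin n, ∀ j : ℕ, 1 ≤ j → j ≤ n - 1 →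
      0 ≤ ∑ t ∈ Finset.univ.filter (fun t : Fin n => (t : ℕ) < j), A (t + r) := by
  have hn : 0 < n := Nat.pos_of_ne_zero (by rintro rfl; simp at hsum)
  have : NeZero n := ⟨hn.ne'⟩
  have hperiod (k : ℕ) : cyclicPrefixSum A (k + n) = cyclicPrefixSum A k - 1 := by
    rw [cyclicPrefixSum_add_period, hsum, sub_eq_add_neg]
  have hunique : ∃! r : Fin n, HasNonnegPrefixSums (fun t => A (t + r)) := by
    simp only [hasNonnegPrefixSums_rotate_iff]
    obtain ⟨r, hrn, hr⟩ := exists_isMinOnWindow hn (fun k => (hperiod k).ge)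
    refine ⟨⟨r, hrn⟩, hr, fun r' hr' => Fin.ext ?_⟩
    exact hr'.eq (fun k => by rw [hperiod]; omega) hr r'.isLt hrn
  exact ⟨Function.injective_translate_of_existsUnique A hunique, hunique⟩
end

section
/- Let n ≥ 1 and let n_1, …, n_σ be nonnegative integers with n_1 + … + n_σ = n − 1, and let M ∈ 𝓜. Then the n rotations M^0, M^1, …, M^{n−1} of M are pairwise distinct, and exactly one of them has an associated sequence L that is a Łukasiewicz path. -/
/-- Number of ones in column `t` of the boolean matrix `M`. -/
def colOnes (σ n : ℕ) (M : Fin σ → Fin n → Bool) (t : Fin n) : ℕ :=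
  (Finset.univ.filter fun i => M i t = true).card

/-- The sequence `L` associated with a matrix: `L j = ∑_{t=1}^{j} (colOnes t − 1)`. -/
def Lseq (σ n : ℕ) (M : Fin σ → Fin n → Bool) (j : ℕ) : ℤ :=
  ∑ t ∈ Finset.univ.filter (fun t : Fin n => (t : ℕ) < j),
    ((colOnes σ n M t : ℤ) - 1)

/-- `L[1..n]` is a Łukasiewicz path. -/
def IsLukasiewicz (n : ℕ) (L : ℕ → ℤ) : Prop :=
  L n = -1 ∧ (∀ j, 1 ≤ j → j ≤ n - 1 → 0 ≤ L j) ∧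
    (∀ j, 1 ≤ j → j ≤ n - 1 → -1 ≤ L (j + 1) - L j)

/-- The `r`-th rotation of `M`: column `j` of `M^r` is column `(j + r) mod n` of `M`. -/
def rotM (σ n : ℕ) (M : Fin σ → Fin n → Bool) (r : Fin n) : Fin σ → Fin n → Bool :=
  fun i j => M i (j + r)

/-
Let `S` be the partial sums of the column excesses `D`, with columns read cyclically. Over one
period `S` drops by exactly one, the `L`-sequence of `M^r` is `S (r + ·) - S r`, and (since every
step of `S` is at least `-1`) `M^r` gives a Łukasiewicz path iff `S r` is a minimum of `S` on
the window `[r, r + n)`. The first minimiser of `S` on `[0, n)` is such a point, because the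
values one period later are lower by exactly one. Two such points `a < b < a + n` cannot
coexist, since `S a ≤ S b ≤ S (a + n) = S a - 1`. Distinctness of the rotations follows from
this uniqueness: if `M^r = M^r'`, rotating the good rotation by `r' - r` gives another good one.
-/

open Finset Fin.NatCast

def IsWindowMin (S : ℕ → ℤ) (n r : ℕ) : Prop :=
  ∀ j, 0 < j → j < n → S r ≤ S (r + j)

section CycleLemma

variable {S : ℕ → ℤ} {n : ℕ}

theorem not_isWindowMin_of_lt (hS : ∀ k, S (k + n) = S k - 1) {a b : ℕ} (hab : a < b)
    (hba : b < a + n) (ha : IsWindowMin S n a) : ¬ IsWindowMin S n b := by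
  intro hb
  have hSab : S a ≤ S b := by
    simpa only [Nat.add_sub_cancel' hab.le] using ha (b - a) (by omega) (by omega)
  have hSba : S b ≤ S a - 1 := by
    simpa only [show b + (a + n - b) = a + n by omega, hS] using
      hb (a + n - b) (by omega) (by omega)
  omega

theorem exists_isWindowMin (hS : ∀ k, S (k + n) = S k - 1) (hn : 0 < n) :
    ∃ r < n, IsWindowMin S n r := by
  classical
  have hmin : ∃ r, r < n ∧ ∀ k < n, S r ≤ S k := by
    obtain ⟨r, hr, h⟩ := (range n).exists_min_image S (nonempty_range_iff.mpr hn.ne')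
    exact ⟨r, mem_range.mp hr, fun k hk => h k (mem_range.mpr hk)⟩
  set r := Nat.find hmin
  obtain ⟨hrn, hr⟩ : r < n ∧ ∀ k < n, S r ≤ S k := Nat.find_spec hmin
  refine ⟨r, hrn, fun j _ hjn => ?_⟩
  by_cases hwrap : r + j < n
  · exact hr _ hwrap
  · have hk : r + j - n < r := by omega
    have hfirst : S r < S (r + j - n) := by
      by_contra! hle
      exact Nat.find_min hmin hk ⟨by omega, fun i hi => hle.trans (hr i hi)⟩
    rw [show r + j = r + j - n + n by omega, hS]
    omega

theorem existsUnique_isWindowMin (hS : ∀ k, S (k + n) = S k - 1) (hn : 0 < n) :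
    ∃! r : Fin n, IsWindowMin S n r := by
  obtain ⟨r, hrn, hr⟩ := exists_isWindowMin hS hn
  refine ⟨⟨r, hrn⟩, hr, fun r' hr' => Fin.ext ?_⟩
  rcases lt_trichotomy (r' : ℕ) r with h | h | h
  · exact absurd hr (not_isWindowMin_of_lt hS h (by omega) hr')
  · exact h
  · exact absurd hr' (not_isWindowMin_of_lt hS h (by omega) hr)

end CycleLemma

section Matrix

variable {σ n : ℕ} (M : Fin σ → Fin n → Bool)

theorem sum_colOnes :
    ∑ t, colOnes σ n M t = ∑ i, #(univ.filter fun j => M i j = true) := by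
  simp only [colOnes, card_filter]
  exact sum_comm

theorem rotM_rotM (r s : Fin n) : rotM σ n (rotM σ n M r) s = rotM σ n M (s + r) := by
  funext i j
  simp only [rotM, add_assoc]

variable [NeZero n]

/-- Column `t` is read as column `t mod n`: this agrees with `Lseq` up to `n` and continues it
with the columns repeated periodically. -/
def colPartialSum (k : ℕ) : ℤ :=
  ∑ t ∈ range k, ((colOnes σ n M t : ℤ) - 1)

theorem colPartialSum_succ (k : ℕ) :
    colPartialSum M (k + 1) = colPartialSum M k + ((colOnes σ n M k : ℤ) - 1) :=
  sum_range_succ _ _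

theorem colPartialSum_add_period (hcol : ∑ t, colOnes σ n M t = n - 1) (k : ℕ) :
    colPartialSum M (k + n) = colPartialSum M k - 1 := by
  induction k with
  | zero =>
    rw [zero_add, colPartialSum,
      ← Fin.sum_univ_eq_sum_range (fun t => (colOnes σ n M t : ℤ) - 1)]
    simp [colPartialSum, sum_sub_distrib, ← Nat.cast_sum, hcol, Nat.cast_sub NeZero.one_le]
  | succ k ih =>
    rw [show k + 1 + n = k + n + 1 by omega, colPartialSum_succ, ih, colPartialSum_succ,
      Nat.cast_add, Fin.natCast_self, add_zero]
    ring

theorem Lseq_eq_colPartialSum {j : ℕ} (hj : j ≤ n) : Lseq σ n M j = colPartialSum M j := by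
  have hreindex := Fin.sum_univ_eq_sum_range
    (fun t => if t < j then (colOnes σ n M t : ℤ) - 1 else 0) n
  simp only [Fin.cast_val_eq_self] at hreindex
  rw [Lseq, sum_filter, hreindex, ← sum_filter, range_eq_Ico, Ico_filter_lt, min_eq_right hj,
    colPartialSum, range_eq_Ico]

theorem Lseq_rotM (r : Fin n) {j : ℕ} (hj : j ≤ n) :
    Lseq σ n (rotM σ n M r) j = colPartialSum M (r + j) - colPartialSum M r := by
  rw [Lseq_eq_colPartialSum _ hj, colPartialSum, colPartialSum, colPartialSum, sum_range_add,
    add_sub_cancel_left]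
  refine sum_congr rfl fun t _ => ?_
  rw [Nat.cast_add, Fin.cast_val_eq_self, add_comm]
  rfl

theorem isLukasiewicz_rotM_iff (hcol : ∑ t, colOnes σ n M t = n - 1) (r : Fin n) :
    IsLukasiewicz n (Lseq σ n (rotM σ n M r)) ↔ IsWindowMin (colPartialSum M) n r := by
  constructor
  · rintro ⟨-, hnonneg, -⟩ j hj0 hjn
    have := hnonneg j (by omega) (by omega)
    rw [Lseq_rotM M r (by omega)] at this
    omega
  · intro hmin
    refine ⟨?_, fun j hj1 hjn => ?_, fun j hj1 hjn => ?_⟩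
    · rw [Lseq_rotM M r le_rfl, colPartialSum_add_period M hcol]
      ring
    · rw [Lseq_rotM M r (by omega)]
      linarith [hmin j (by omega) (by omega)]
    · rw [Lseq_rotM M r (by omega), Lseq_rotM M r (by omega), ← add_assoc, colPartialSum_succ]
      omega

theorem rotM_injective_of_existsUnique {P : (Fin σ → Fin n → Bool) → Prop}
    (h : ∃! r, P (rotM σ n M r)) : Function.Injective (rotM σ n M) := by
  obtain ⟨s, hs, huniq⟩ := h
  intro r r' hrr'
  have hshift : rotM σ n M (s - r + r') = rotM σ n M s := by
    rw [← rotM_rotM, ← hrr', rotM_rotM, sub_add_cancel]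
  have hs' : s - r + r' = s - r + r :=
    (huniq _ (by dsimp only; rwa [hshift])).trans (sub_add_cancel s r).symm
  exact (add_left_cancel hs').symm

end Matrix

/-- For every matrix `M ∈ 𝓜`, all `n` rotations of `M` are pairwise distinct,
and exactly one of them has an associated sequence `L` that is a Łukasiewicz path. -/
theorem stmt4 (σ n : ℕ) (hn : 1 ≤ n) (nd : Fin σ → ℕ)
    (hsum : ∑ i, nd i = n - 1) (M : Fin σ → Fin n → Bool)
    (hM : ∀ i, (Finset.univ.filter fun j => M i j = true).card = nd i) :
    Function.Injective (rotM σ n M) ∧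
    ∃! r : Fin n, IsLukasiewicz n (Lseq σ n (rotM σ n M r)) := by
  have : NeZero n := ⟨by omega⟩
  have hcol : ∑ t, colOnes σ n M t = n - 1 := by
    rw [sum_colOnes]
    simp only [hM, hsum]
  have hunique : ∃! r : Fin n, IsLukasiewicz n (Lseq σ n (rotM σ n M r)) := by
    simpa only [isLukasiewicz_rotM_iff M hcol] using
      existsUnique_isWindowMin (colPartialSum_add_period M hcol) (by omega)
  exact ⟨rotM_injective_of_existsUnique M (P := fun A => IsLukasiewicz n (Lseq σ n A)) hunique,
    hunique⟩
end

section
/- For every h ≥ 1 let S_h be the complete balanced binary trie of height h over the alphabet {a, b}, i.e., the set of all strings over {a, b} of length at most h, with n = 2^{h+1} − 1 nodes, and let r be its number of XBWT runs. Then (1/4)·n·H_0(S_h) ≤ r ≤ n·H_0(S_h); in particular r = Θ(n·H_0(S_h)) = Θ(n) over this infinite family of tries. -/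
/-!
In co-lexicographic order the strings of length at most `k + 1` are `ε`, then the strings
ending in `0`, then those ending in `1`, each block being a copy of the strings of length at most
`k`. Hence, for either symbol `c`, the bits `u·c ∈ S` (that is, `|u| ≤ k`) read along the order
form the word `W (k + 1) = true · W k · W k` with `W 0 = false`, which has `2^k` maximal blocks of
`true`; so `r = 2^(k+1)` while `n = 2^(k+2) - 1`. Each symbol ends `n_c = 2^(k+1) - 1 < n / 2`
nodes, and for `p ≤ 1/2` the binary entropy satisfies `p log 2 ≤ H(p) ≤ log 2`; therefore
`n_0 + n_1 ≤ n H₀ ≤ 2n`, while `n / 2 ≤ r ≤ n_0 + n_1`.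
-/

/-- The co-lexicographic order on strings: compare the reversed strings in the
(lexicographic) order on lists, the empty string being smallest. -/
def colexLe (σ : ℕ) (s t : List (Fin σ)) : Prop := s.reverse ≤ t.reverse

instance (σ : ℕ) : DecidableRel (colexLe σ) :=
  fun s t => inferInstanceAs (Decidable (s.reverse ≤ t.reverse))

instance (σ : ℕ) : IsTrans (List (Fin σ)) (colexLe σ) :=
  ⟨fun _ _ _ h1 h2 => le_trans h1 h2⟩

instance (σ : ℕ) : IsAntisymm (List (Fin σ)) (colexLe σ) :=
  ⟨fun _ _ h1 h2 => List.reverse_injective (le_antisymm h1 h2)⟩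

instance (σ : ℕ) : IsTotal (List (Fin σ)) (colexLe σ) :=
  ⟨fun a b => le_total a.reverse b.reverse⟩

/-- The number `r` of XBWT runs of a trie `S`: with `u_1, …, u_n` the nodes of
`S` in co-lexicographic order (0-indexed below), `r = ∑_{c} r_c` where `r_c`
counts the indices `i` such that `u_i·c ∈ S` and either `i = n` or
`u_{i+1}·c ∉ S`. -/
def xbwtRuns (σ : ℕ) (S : Finset (List (Fin σ))) : ℕ :=
  ∑ c : Fin σ,
    ((Finset.range (S.sort (colexLe σ)).length).filter fun i =>
      (S.sort (colexLe σ)).getD i [] ++ [c] ∈ S ∧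
      (i = (S.sort (colexLe σ)).length - 1 ∨
        (S.sort (colexLe σ)).getD (i + 1) [] ++ [c] ∉ S)).card

/-- The 0-th order empirical entropy of a trie `S` with `n` nodes:
`H₀ = ∑ᵢ (nᵢ/n)·log₂(n/nᵢ) + ((n−nᵢ)/n)·log₂(n/(n−nᵢ))`. -/
noncomputable def trieH0 (σ : ℕ) (S : Finset (List (Fin σ))) : ℝ :=
  ∑ i : Fin σ,
    (((S.filter fun s => s.getLast? = some i).card : ℝ) / (S.card : ℝ) *
        Real.logb 2 ((S.card : ℝ) / ((S.filter fun s => s.getLast? = some i).card : ℝ)) +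
      ((S.card : ℝ) - ((S.filter fun s => s.getLast? = some i).card : ℝ)) / (S.card : ℝ) *
        Real.logb 2 ((S.card : ℝ) /
          ((S.card : ℝ) - ((S.filter fun s => s.getLast? = some i).card : ℝ))))

theorem colexLe_append_singleton_iff {σ : ℕ} (c : Fin σ) (s t : List (Fin σ)) :
    colexLe σ (s ++ [c]) (t ++ [c]) ↔ colexLe σ s t := by
  simp only [colexLe, List.reverse_append, List.reverse_singleton, List.singleton_append]
  constructor
  · intro hle
    by_contra hlt
    exact not_le.mpr (List.Lex.cons (lt_of_not_ge hlt)) hle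
  · exact List.cons_le_cons c

theorem colexLe_nil {σ : ℕ} (s : List (Fin σ)) : colexLe σ [] s := by
  rcases List.lex_nil_or_eq_nil (r := (· < ·)) s.reverse with hlt | hnil
  · exact le_of_lt hlt
  · simp [colexLe, hnil]

theorem colexLe_append_zero_append_one (s t : List (Fin 2)) :
    colexLe 2 (s ++ [0]) (t ++ [1]) := by
  simp only [colexLe, List.reverse_append, List.reverse_singleton, List.singleton_append]
  exact le_of_lt (List.Lex.rel (by decide))

def colexBinaryStrings : ℕ → List (List (Fin 2))
  | 0 => [[]]
  | k + 1 =>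
    [] :: ((colexBinaryStrings k).map (· ++ [0]) ++ (colexBinaryStrings k).map (· ++ [1]))

theorem mem_colexBinaryStrings {k : ℕ} {s : List (Fin 2)} :
    s ∈ colexBinaryStrings k ↔ s.length ≤ k := by
  induction k generalizing s with
  | zero => simp [colexBinaryStrings, List.length_eq_zero_iff]
  | succ k ih =>
    simp only [colexBinaryStrings, List.mem_cons, List.mem_append, List.mem_map, ih]
    constructor
    · rintro (rfl | ⟨t, ht, rfl⟩ | ⟨t, ht, rfl⟩) <;>
        simp only [List.length_nil, List.length_append, List.length_singleton] <;> omega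
    · intro hs
      rcases List.eq_nil_or_concat' s with rfl | ⟨t, c, rfl⟩
      · exact Or.inl rfl
      have ht : t.length ≤ k := by rw [List.length_append, List.length_singleton] at hs; omega
      fin_cases c
      · exact Or.inr (Or.inl ⟨t, ht, rfl⟩)
      · exact Or.inr (Or.inr ⟨t, ht, rfl⟩)

theorem nodup_colexBinaryStrings (k : ℕ) : (colexBinaryStrings k).Nodup := by
  induction k with
  | zero => simp [colexBinaryStrings]
  | succ k ih =>
    rw [colexBinaryStrings, List.nodup_cons, List.nodup_append]
    refine ⟨by simp, ih.map (List.append_left_injective _), ih.map (List.append_left_injective _),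
      ?_⟩
    simp only [List.mem_map]
    rintro _ ⟨s, -, rfl⟩ _ ⟨t, -, rfl⟩ hst
    simpa using congrArg List.getLast? hst

theorem pairwise_colexLe_colexBinaryStrings (k : ℕ) :
    (colexBinaryStrings k).Pairwise (colexLe 2) := by
  induction k with
  | zero => simp [colexBinaryStrings]
  | succ k ih =>
    rw [colexBinaryStrings, List.pairwise_cons, List.pairwise_append, List.pairwise_map,
      List.pairwise_map]
    refine ⟨fun s _ => colexLe_nil s, ih.imp (colexLe_append_singleton_iff 0 _ _).mpr,
      ih.imp (colexLe_append_singleton_iff 1 _ _).mpr, ?_⟩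
    simp only [List.mem_map]
    rintro _ ⟨s, -, rfl⟩ _ ⟨t, -, rfl⟩
    exact colexLe_append_zero_append_one s t

theorem length_colexBinaryStrings_add_one (k : ℕ) :
    (colexBinaryStrings k).length + 1 = 2 ^ (k + 1) := by
  induction k with
  | zero => rfl
  | succ k ih =>
    simp only [colexBinaryStrings, List.length_cons, List.length_append, List.length_map]
    rw [pow_succ]
    omega

theorem eq_toFinset_colexBinaryStrings {k : ℕ} {S : Finset (List (Fin 2))}
    (hS : ∀ l : List (Fin 2), l ∈ S ↔ l.length ≤ k) :
    S = (colexBinaryStrings k).toFinset := by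
  ext s
  simp [hS, mem_colexBinaryStrings]

theorem sort_colexLe_eq_colexBinaryStrings {k : ℕ} {S : Finset (List (Fin 2))}
    (hS : ∀ l : List (Fin 2), l ∈ S ↔ l.length ≤ k) :
    S.sort (colexLe 2) = colexBinaryStrings k :=
  List.Perm.eq_of_pairwise' (S.pairwise_sort _) (pairwise_colexLe_colexBinaryStrings k)
    (List.perm_of_nodup_nodup_toFinset_eq (S.sort_nodup _) (nodup_colexBinaryStrings k)
      (by rw [Finset.sort_toFinset, ← eq_toFinset_colexBinaryStrings hS]))

theorem card_add_one_eq_two_pow {k : ℕ} {S : Finset (List (Fin 2))}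
    (hS : ∀ l : List (Fin 2), l ∈ S ↔ l.length ≤ k) :
    S.card + 1 = 2 ^ (k + 1) := by
  rw [eq_toFinset_colexBinaryStrings hS,
    List.toFinset_card_of_nodup (nodup_colexBinaryStrings k), length_colexBinaryStrings_add_one]

def runEnds : List Bool → ℕ
  | [] => 0
  | b :: t => (b && !t.headD false).toNat + runEnds t

theorem card_filter_runEnd_eq_runEnds {α : Type*} (p : α → Prop) [DecidablePred p] (d : α) :
    ∀ l : List α, ((Finset.range l.length).filter fun i =>
        p (l.getD i d) ∧ (i = l.length - 1 ∨ ¬ p (l.getD (i + 1) d))).card =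
      runEnds (l.map fun a => decide (p a))
  | [] => rfl
  | a :: t => by
    have htail : ∑ i ∈ Finset.range t.length,
        (if p (t.getD i d) ∧ (i + 1 = t.length ∨ ¬ p (t.getD (i + 1) d)) then 1 else 0) =
        runEnds (t.map fun a => decide (p a)) := by
      rw [← card_filter_runEnd_eq_runEnds p d t, Finset.card_filter]
      refine Finset.sum_congr rfl fun i hi => ?_
      have : i + 1 = t.length ↔ i = t.length - 1 := by rw [Finset.mem_range] at hi; omega
      simp only [this]
    rw [Finset.card_filter, List.length_cons, Finset.sum_range_succ']
    simp only [List.getD_cons_succ, List.getD_cons_zero, Nat.add_sub_cancel, htail,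
      List.map_cons, runEnds]
    rw [add_comm]
    congr 1
    cases t with
    | nil => by_cases hpa : p a <;> simp [hpa]
    | cons b t => by_cases hpa : p a <;> by_cases hpb : p b <;> simp [hpa, hpb]

theorem runEnds_append {x : List Bool} (y : List Bool) (hx : x.getLast? = some false) :
    runEnds (x ++ y) = runEnds x + runEnds y := by
  induction x with
  | nil => simp at hx
  | cons a x ih =>
    cases x with
    | nil => simp_all [runEnds]
    | cons b x =>
      rw [List.getLast?_cons_cons] at hx
      simp only [List.cons_append, runEnds] at ih ⊢
      rw [ih hx]
      simp only [List.headD_cons]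
      ring

def internalMarks : ℕ → List Bool
  | 0 => [false]
  | k + 1 => true :: (internalMarks k ++ internalMarks k)

theorem getLast?_internalMarks (k : ℕ) : (internalMarks k).getLast? = some false := by
  induction k with
  | zero => rfl
  | succ k ih =>
    rw [internalMarks, ← List.cons_append, List.getLast?_append, ih]
    rfl

theorem runEnds_internalMarks (k : ℕ) : runEnds (internalMarks (k + 1)) = 2 ^ k := by
  induction k with
  | zero => rfl
  | succ k ih =>
    have hhead : (internalMarks (k + 1) ++ internalMarks (k + 1)).headD false = true := rfl
    rw [internalMarks, runEnds, hhead, runEnds_append _ (getLast?_internalMarks _), ih]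
    simp [pow_succ, mul_two]

def symbolCount (σ : ℕ) (S : Finset (List (Fin σ))) (c : Fin σ) : ℕ :=
  (S.filter fun s => s.getLast? = some c).card

section Entropy

open Real

theorem trieH0_eq_sum_binEntropy {σ : ℕ} {S : Finset (List (Fin σ))} (hS : S.Nonempty) :
    trieH0 σ S = ∑ c, binEntropy (symbolCount σ S c / S.card) / log 2 := by
  refine Finset.sum_congr rfl fun c _ => ?_
  have hn : (S.card : ℝ) ≠ 0 := by exact_mod_cast hS.card_pos.ne'
  have hcompl :
      ((S.card : ℝ) - symbolCount σ S c) / S.card = 1 - symbolCount σ S c / S.card := by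
    field_simp
  rw [binEntropy, ← hcompl, inv_div, inv_div]
  simp only [logb, symbolCount]
  ring

theorem trieH0_le {σ : ℕ} {S : Finset (List (Fin σ))} (hS : S.Nonempty) :
    trieH0 σ S ≤ σ := by
  rw [trieH0_eq_sum_binEntropy hS]
  calc ∑ c, binEntropy (symbolCount σ S c / S.card) / log 2
      ≤ ∑ _c : Fin σ, (1 : ℝ) := Finset.sum_le_sum fun c _ =>
        (div_le_one (log_pos one_lt_two)).mpr binEntropy_le_log_two
    _ = σ := by simp

theorem mul_log_two_le_binEntropy {p : ℝ} (hp₀ : 0 ≤ p) (hp : p ≤ 2⁻¹) :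
    p * log 2 ≤ binEntropy p := by
  rcases hp₀.eq_or_lt with rfl | hpos
  · simp
  have hlog : log 2 ≤ log p⁻¹ := log_le_log two_pos ((le_inv_comm₀ two_pos hpos).mpr hp)
  have htail : 0 ≤ (1 - p) * log (1 - p)⁻¹ := by
    rw [log_inv, mul_neg, ← neg_mul]
    exact negMulLog_nonneg (by linarith) (by linarith)
  rw [binEntropy]
  nlinarith

theorem sum_symbolCount_le_card_mul_trieH0 {σ : ℕ} {S : Finset (List (Fin σ))} (hS : S.Nonempty)
    (hbal : ∀ c, 2 * symbolCount σ S c ≤ S.card) :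
    ∑ c, (symbolCount σ S c : ℝ) ≤ S.card * trieH0 σ S := by
  have hn : (0 : ℝ) < S.card := by exact_mod_cast hS.card_pos
  rw [trieH0_eq_sum_binEntropy hS, Finset.mul_sum]
  refine Finset.sum_le_sum fun c _ => ?_
  have hp : (symbolCount σ S c : ℝ) / S.card ≤ 2⁻¹ := by
    rw [div_le_iff₀ hn]
    have : (2 * symbolCount σ S c : ℝ) ≤ S.card := by exact_mod_cast hbal c
    linarith
  have key := mul_log_two_le_binEntropy (by positivity) hp
  rw [mul_div_assoc', le_div_iff₀ (log_pos one_lt_two)]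
  calc (symbolCount σ S c : ℝ) * log 2 = S.card * (symbolCount σ S c / S.card * log 2) := by
        field_simp
    _ ≤ _ := mul_le_mul_of_nonneg_left key hn.le

end Entropy

theorem map_colexBinaryStrings_eq_internalMarks (k : ℕ) :
    (colexBinaryStrings k).map (fun s => decide (s.length < k)) = internalMarks k := by
  induction k with
  | zero => rfl
  | succ k ih =>
    simp only [colexBinaryStrings, internalMarks, List.map_cons, List.map_append, List.map_map]
    have hshift : ∀ c : Fin 2, (fun s : List (Fin 2) => decide ((s ++ [c]).length < k + 1)) =
        fun s => decide (s.length < k) := by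
      intro c
      funext s
      simp
    simp only [Function.comp_def, hshift, ih]
    simp

theorem symbolCount_add_one_eq_two_pow {k : ℕ} {S : Finset (List (Fin 2))}
    (hS : ∀ l : List (Fin 2), l ∈ S ↔ l.length ≤ k + 1) (c : Fin 2) :
    symbolCount 2 S c + 1 = 2 ^ (k + 1) := by
  have himage : S.filter (fun s => s.getLast? = some c) =
      (colexBinaryStrings k).toFinset.image (· ++ [c]) := by
    ext s
    simp only [Finset.mem_filter, Finset.mem_image, List.mem_toFinset, mem_colexBinaryStrings, hS]
    constructor
    · rintro ⟨hlen, hlast⟩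
      refine ⟨s.dropLast, ?_, List.dropLast_append_getLast? c hlast⟩
      simp only [List.length_dropLast]
      omega
    · rintro ⟨t, ht, rfl⟩
      exact ⟨by rw [List.length_append, List.length_singleton]; omega, List.getLast?_concat⟩
  rw [symbolCount, himage, Finset.card_image_of_injective _ (List.append_left_injective _),
    List.toFinset_card_of_nodup (nodup_colexBinaryStrings k), length_colexBinaryStrings_add_one]

theorem xbwtRuns_eq_two_pow {k : ℕ} {S : Finset (List (Fin 2))}
    (hS : ∀ l : List (Fin 2), l ∈ S ↔ l.length ≤ k + 1) :
    xbwtRuns 2 S = 2 ^ (k + 1) := by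
  have hc : ∀ c : Fin 2, ((colexBinaryStrings (k + 1)).map fun s => decide (s ++ [c] ∈ S)) =
      internalMarks (k + 1) := by
    intro c
    rw [← map_colexBinaryStrings_eq_internalMarks]
    refine List.map_congr_left fun s _ => ?_
    simp [hS]
  rw [xbwtRuns, sort_colexLe_eq_colexBinaryStrings hS, Finset.sum_congr rfl fun c _ =>
    (card_filter_runEnd_eq_runEnds (fun s => s ++ [c] ∈ S) [] _).trans
      (by rw [hc, runEnds_internalMarks])]
  simp [pow_succ, mul_comm]

/-- For the complete balanced binary trie `S_h` of height `h ≥ 1` (with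
`n = 2^{h+1} − 1` nodes) and its number `r` of XBWT runs:
`(1/4)·n·H₀(S_h) ≤ r ≤ n·H₀(S_h)`; in particular `r = Θ(n·H₀) = Θ(n)` on
this infinite family of tries. -/
theorem stmt13 (h : ℕ) (hh : 1 ≤ h) (S : Finset (List (Fin 2)))
    (hS : ∀ l : List (Fin 2), l ∈ S ↔ l.length ≤ h) :
    (1 / 4 : ℝ) * (S.card : ℝ) * trieH0 2 S ≤ (xbwtRuns 2 S : ℝ) ∧
    (xbwtRuns 2 S : ℝ) ≤ (S.card : ℝ) * trieH0 2 S := by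
  obtain ⟨k, rfl⟩ : ∃ k, h = k + 1 := ⟨h - 1, by omega⟩
  have hnonempty : S.Nonempty := ⟨[], (hS []).mpr (Nat.zero_le _)⟩
  have hn : S.card + 1 = 2 ^ (k + 2) := card_add_one_eq_two_pow hS
  have hnc := symbolCount_add_one_eq_two_pow hS
  have hr : xbwtRuns 2 S = 2 ^ (k + 1) := xbwtRuns_eq_two_pow hS
  have hupper : (S.card : ℝ) * trieH0 2 S ≤ S.card * 2 :=
    mul_le_mul_of_nonneg_left (by exact_mod_cast trieH0_le hnonempty) (Nat.cast_nonneg _)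
  have hlower := sum_symbolCount_le_card_mul_trieH0 hnonempty fun c => by
    have := hnc c
    rw [pow_succ] at hn this
    omega
  rw [Fin.sum_univ_two] at hlower
  have hnR : (S.card : ℝ) + 1 = 2 * 2 ^ (k + 1) := by rw [← pow_succ']; exact_mod_cast hn
  have hncR : ∀ c, (symbolCount 2 S c : ℝ) + 1 = 2 ^ (k + 1) := fun c => by exact_mod_cast hnc c
  have hpow : (2 : ℝ) ≤ 2 ^ (k + 1) := le_self_pow₀ one_le_two (Nat.succ_ne_zero k)
  rw [hr, Nat.cast_pow, Nat.cast_ofNat]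
  constructor <;> linarith [hncR 0, hncR 1]
end
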